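/- If G is a 3-γₜ-edge-critical graph of diameter two, then G has no cut vertex; i.e., G is 2-connected. -/

import Mathlib

/-! A cut vertex `v` of a graph of diameter two is adjacent to every other vertex `u`: some vertex
`w` lies in a different component of `G - v` from `u`, so the common neighbour of `u` and `w` must
be `v`. Then `v` together with any other vertex is a total dominating set of size two,
contradicting `γₜ(G) = 3`. -/

/-- The total domination number of a graph, as an extended natural number
(`⊤` when no total dominating set exists). -/
noncomputable def gammaT {V : Type*} (G : SimpleGraph V) : ℕ∞ :=
  sInf {n : ℕ∞ | ∃ S : Finset V, (S.card : ℕ∞) = n ∧ ∀ v : V, ∃ u ∈ S, G.Adj v u}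

/-- G has diameter two. -/
def DiamTwo {V : Type*} (G : SimpleGraph V) : Prop :=
  (∀ u v : V, u ≠ v → G.Adj u v ∨ ∃ w : V, G.Adj u w ∧ G.Adj w v) ∧
    ∃ u v : V, u ≠ v ∧ ¬ G.Adj u v

/-- Removing the vertex set S disconnects G. -/
def RemovalDisconnects {V : Type*} (G : SimpleGraph V) (S : Set V) : Prop :=
  ∃ a b : (Sᶜ : Set V), ¬ (G.induce Sᶜ).Reachable a b

/-- G is 3-γₜ-edge-critical. -/
def Critical3 {V : Type*} [DecidableEq V] (G : SimpleGraph V) : Prop :=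
  gammaT G = 3 ∧
    ∀ u v : V, u ≠ v → ¬ G.Adj u v →
      gammaT (G ⊔ SimpleGraph.fromEdgeSet {s(u, v)}) = 2

namespace SimpleGraph

variable {V : Type*} {G : SimpleGraph V}

def IsTotalDominating (G : SimpleGraph V) (S : Finset V) : Prop :=
  ∀ v : V, ∃ u ∈ S, G.Adj v u

theorem gammaT_le_card {S : Finset V} (hS : G.IsTotalDominating S) : gammaT G ≤ S.card :=
  sInf_le ⟨S, rfl, hS⟩

theorem isTotalDominating_pair [DecidableEq V] {v a : V} (hv : ∀ u, u ≠ v → G.Adj u v)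
    (ha : a ≠ v) : G.IsTotalDominating {v, a} := by
  intro x
  by_cases hx : x = v
  · exact ⟨a, by simp, hx ▸ (hv a ha).symm⟩
  · exact ⟨v, by simp, hv x hx⟩

theorem exists_not_reachable_of_not_reachable {W : Type*} {H : SimpleGraph W}
    {a b : W} (hab : ¬ H.Reachable a b) (x : W) : ∃ y, ¬ H.Reachable x y := by
  by_cases hxa : H.Reachable x a
  · exact ⟨b, fun hxb => hab (hxa.symm.trans hxb)⟩
  · exact ⟨a, hxa⟩

theorem adj_of_removalDisconnects_singleton
    (hdiam : ∀ u w : V, u ≠ w → G.Adj u w ∨ ∃ c, G.Adj u c ∧ G.Adj c w) {v : V}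
    (hcut : RemovalDisconnects G {v}) (u : V) (hu : u ≠ v) : G.Adj u v := by
  obtain ⟨a, b, hab⟩ := hcut
  let u' : (({v} : Set V)ᶜ : Set V) := ⟨u, hu⟩
  obtain ⟨w, hnr⟩ := exists_not_reachable_of_not_reachable hab u'
  have hne : u ≠ w := fun h => hnr ((Subtype.ext h : u' = w) ▸ Reachable.refl u')
  have hnadj : ¬ G.Adj u w := fun h => hnr (Adj.reachable (by simpa [u'] using h))
  obtain h | ⟨c, huc, hcw⟩ := hdiam u w hne
  · exact absurd h hnadj
  · by_contra hcv
    -- otherwise `u - c - w` is a path avoiding `v`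
    let c' : (({v} : Set V)ᶜ : Set V) := ⟨c, fun h => hcv (h ▸ huc)⟩
    have huc' : (G.induce ({v} : Set V)ᶜ).Adj u' c' := by simpa [u', c'] using huc
    have hcw' : (G.induce ({v} : Set V)ᶜ).Adj c' w := by simpa [c'] using hcw
    exact hnr (huc'.reachable.trans hcw'.reachable)

end SimpleGraph

theorem stmt9_general {V : Type*} [DecidableEq V] (G : SimpleGraph V)
    (hcrit : Critical3 G) (hdiam : DiamTwo G) :
    ∀ v : V, ¬ RemovalDisconnects G {v} := by
  intro v hcut
  have hv := SimpleGraph.adj_of_removalDisconnects_singleton hdiam.1 hcut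
  obtain ⟨a, -, -⟩ := hcut
  have hav : (a : V) ≠ v := a.2
  have hle := SimpleGraph.gammaT_le_card (SimpleGraph.isTotalDominating_pair hv hav)
  rw [hcrit.1, Finset.card_pair hav.symm] at hle
  norm_num at hle

/-- A 3-γₜ-edge-critical graph of diameter two has no cut
vertex. -/
theorem stmt9 {V : Type*} [Fintype V] [DecidableEq V] (G : SimpleGraph V)
    (hcrit : Critical3 G) (hconn : G.Connected) (hdiam : DiamTwo G) :
    ∀ v : V, ¬ RemovalDisconnects G {v} :=
  stmt9_general G hcrit hdiam
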